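/- arXiv:1705.03344 — 3 statements merged into one kernel-verified Lean document; each statement's English description precedes it below -/
import Mathlib

section
/- With notation as above (unimodular M with rows (pᵢ,qᵢ,rᵢ), rᵢ>0, uᵢ = (pᵢ/rᵢ, qᵢ/rᵢ), L = (M⁻¹)ᵀ with rows (aᵢ,bᵢ,cᵢ), δᵢ = √(aᵢ² + bᵢ²)), the distance between vertices uⱼ and u_k equals δᵢ/(rⱼ r_k), and the distance from uᵢ to the line through uⱼ and u_k equals 1/(rᵢ δᵢ), for {i,j,k} = {1,2,3}. -/
/-!
Write `xᵢ = (pᵢ, qᵢ, rᵢ)` for the rows of `M`, so that `uᵢ` is the dehomogenization of `xᵢ`.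
Since `det M = 1`, `(M⁻¹)ᵀ` is the transposed adjugate, whose rows are the cross products
`ℓᵢ = xⱼ × x_k` for cyclic `(i, j, k)`; moreover `xᵢ ⬝ ℓᵢ = det M = 1`. In the affine chart,
`|uⱼ - u_k| = ‖(ℓᵢ 0, ℓᵢ 1)‖ / (rⱼ r_k) = δᵢ / (rⱼ r_k)`, and twice the area of the triangle is
`|det (xᵢ, xⱼ, x_k)| / (rᵢ rⱼ r_k) = 1 / (rᵢ rⱼ r_k)`; dividing by the base gives the height
`1 / (rᵢ δᵢ)`.
-/

open Matrix Metric EuclideanGeometry RealInnerProductSpace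

theorem infDist_affineSpan_pair {V P : Type*} [NormedAddCommGroup V] [InnerProductSpace ℝ V]
    [MetricSpace P] [NormedAddTorsor V P] (p a b : P) :
    infDist p (line[ℝ, a, b] : Set P) =
      ‖(p -ᵥ a) - (⟪b -ᵥ a, p -ᵥ a⟫ / ‖b -ᵥ a‖ ^ 2) • (b -ᵥ a)‖ := by
  set t := ⟪b -ᵥ a, p -ᵥ a⟫ / ‖b -ᵥ a‖ ^ 2
  have hfoot : (orthogonalProjection line[ℝ, a, b] p : P) = AffineMap.lineMap a b t := by
    refine coe_orthogonalProjection_eq_iff_mem.2 ⟨AffineMap.lineMap_mem_affineSpan_pair t a b, ?_⟩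
    rw [direction_affineSpan, vectorSpan_pair, Submodule.mem_orthogonal_singleton_iff_inner_right,
      AffineMap.lineMap_apply, vsub_vadd_eq_vsub_sub, ← neg_vsub_eq_vsub_rev b a, inner_neg_left,
      inner_sub_right, inner_smul_right, real_inner_self_eq_norm_sq, neg_eq_zero, sub_eq_zero]
    rcases eq_or_ne (b -ᵥ a) 0 with h | h
    · simp [h]
    · simp only [t]
      field_simp [norm_ne_zero_iff.2 h]
  rw [← dist_orthogonalProjection_eq_infDist, hfoot, dist_eq_norm_vsub V, AffineMap.lineMap_apply,
    vsub_vadd_eq_vsub_sub]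

theorem EuclideanSpace.infDist_affineSpan_pair (p a b : EuclideanSpace ℝ (Fin 2)) (hab : a ≠ b) :
    infDist p (line[ℝ, a, b] : Set (EuclideanSpace ℝ (Fin 2))) =
      |(p 0 - a 0) * (b 1 - a 1) - (p 1 - a 1) * (b 0 - a 0)| / dist a b := by
  have hba : 0 < ‖b - a‖ := norm_pos_iff.2 (sub_ne_zero.2 hab.symm)
  rw [_root_.infDist_affineSpan_pair, dist_comm, dist_eq_norm, vsub_eq_sub, vsub_eq_sub,
    eq_div_iff hba.ne', ← sq_eq_sq₀ (by positivity) (by positivity), mul_pow, sq_abs]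
  have hba_sq : ‖b - a‖ ^ 2 = (b 0 - a 0) ^ 2 + (b 1 - a 1) ^ 2 := by
    simp [EuclideanSpace.norm_sq_eq, Fin.sum_univ_two]
  have hpos : 0 < (b 0 - a 0) ^ 2 + (b 1 - a 1) ^ 2 := hba_sq ▸ pow_pos hba 2
  rw [hba_sq]
  simp only [EuclideanSpace.norm_sq_eq, Fin.sum_univ_two, EuclideanSpace.inner_eq_star_dotProduct,
    dotProduct, PiLp.sub_apply, PiLp.smul_apply, WithLp.ofLp_sub, Pi.sub_apply, smul_eq_mul,
    Real.norm_eq_abs, sq_abs, star_trivial]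
  field_simp
  ring

noncomputable def dehomogenize (x : Fin 3 → ℝ) : EuclideanSpace ℝ (Fin 2) :=
  WithLp.toLp 2 ![x 0 / x 2, x 1 / x 2]

theorem dist_dehomogenize {y z : Fin 3 → ℝ} (hy : 0 < y 2) (hz : 0 < z 2) :
    dist (dehomogenize y) (dehomogenize z) =
      √((y ⨯₃ z) 0 ^ 2 + (y ⨯₃ z) 1 ^ 2) / (y 2 * z 2) := by
  rw [EuclideanSpace.dist_eq, ← Real.sqrt_sq (by positivity : 0 ≤ y 2 * z 2), ← Real.sqrt_div']
  · congr 1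
    simp only [dehomogenize, Fin.sum_univ_two, Real.dist_eq, sq_abs, cross_apply, cons_val_zero,
      cons_val_one, cons_val_fin_one]
    field_simp
    ring
  · positivity

theorem dehomogenize_ne_dehomogenize {x y z : Fin 3 → ℝ} (hy : 0 < y 2) (hz : 0 < z 2)
    (hxyz : x ⬝ᵥ y ⨯₃ z ≠ 0) : dehomogenize y ≠ dehomogenize z := by
  intro h
  have h0 := congrArg (fun v : EuclideanSpace ℝ (Fin 2) => v 0) h
  have h1 := congrArg (fun v : EuclideanSpace ℝ (Fin 2) => v 1) h
  simp only [dehomogenize, cons_val_zero, cons_val_one, cons_val_fin_one] at h0 h1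
  field_simp [hy.ne'] at h0 h1
  have h2 : y 0 * z 1 - y 1 * z 0 = 0 :=
    mul_left_cancel₀ hz.ne' (by linear_combination z 1 * h0 - z 0 * h1)
  apply hxyz
  simp only [cross_apply, dotProduct, Fin.sum_univ_three, cons_val_zero, cons_val_one, cons_val]
  linear_combination x 0 * h1 - x 1 * h0 + x 2 * h2

theorem infDist_dehomogenize {x y z : Fin 3 → ℝ} (hx : 0 < x 2) (hy : 0 < y 2) (hz : 0 < z 2)
    (hyz : dehomogenize y ≠ dehomogenize z) :
    infDist (dehomogenize x) (line[ℝ, dehomogenize y, dehomogenize z] : Set _) =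
      |x ⬝ᵥ y ⨯₃ z| / (x 2 * √((y ⨯₃ z) 0 ^ 2 + (y ⨯₃ z) 1 ^ 2)) := by
  have harea : (dehomogenize x 0 - dehomogenize y 0) * (dehomogenize z 1 - dehomogenize y 1) -
      (dehomogenize x 1 - dehomogenize y 1) * (dehomogenize z 0 - dehomogenize y 0) =
      -(x ⬝ᵥ y ⨯₃ z / (x 2 * y 2 * z 2)) := by
    simp only [dehomogenize, cross_apply, dotProduct, Fin.sum_univ_three, cons_val_zero,
      cons_val_one, cons_val_fin_one, cons_val]
    field_simp
    ring
  rw [EuclideanSpace.infDist_affineSpan_pair _ _ _ hyz, dist_dehomogenize hy hz, harea, abs_neg,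
    abs_div, abs_of_pos (by positivity : 0 < x 2 * y 2 * z 2)]
  field_simp

theorem Matrix.transpose_adjugate_apply_eq_cross {R : Type*} [CommRing R]
    (A : Matrix (Fin 3) (Fin 3) R) (i : Fin 3) :
    A.adjugateᵀ i = A (i + 1) ⨯₃ A (i + 2) := by
  ext j
  fin_cases i <;> fin_cases j <;> simp [adjugate_fin_three, cross_apply] <;> ring

theorem Matrix.dotProduct_transpose_adjugate_self {n R : Type*} [Fintype n] [DecidableEq n]
    [CommRing R] (A : Matrix n n R) (i : n) :
    A i ⬝ᵥ A.adjugateᵀ i = A.det := by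
  simpa [mul_apply, dotProduct] using congrFun (congrFun (mul_adjugate A) i) i

theorem Fin.three_cases_of_pairwise_ne {i j k : Fin 3} (hij : i ≠ j) (hjk : j ≠ k) (hki : k ≠ i) :
    j = i + 1 ∧ k = i + 2 ∨ j = i + 2 ∧ k = i + 1 := by
  revert i j k
  decide

/-- Side lengths and heights of a regular triangle in terms of the dual data:
`dist (uⱼ) (u_k) = δᵢ/(rⱼ r_k)` and the distance from `uᵢ` to the opposite line is
`1/(rᵢ δᵢ)`. -/
theorem stmt4 (M : Matrix (Fin 3) (Fin 3) ℤ)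
    (hr : ∀ i, 0 < M i 2) (hdet : M.det = 1)
    (u : Fin 3 → EuclideanSpace ℝ (Fin 2))
    (hu : ∀ i, u i = ![(M i 0 : ℝ) / (M i 2 : ℝ), (M i 1 : ℝ) / (M i 2 : ℝ)])
    (L : Matrix (Fin 3) (Fin 3) ℝ)
    (hL : L = ((M.map (Int.cast : ℤ → ℝ))⁻¹).transpose)
    (δ : Fin 3 → ℝ)
    (hδ : ∀ i, δ i = Real.sqrt ((L i 0) ^ 2 + (L i 1) ^ 2)) :
    ∀ i j k : Fin 3, i ≠ j → j ≠ k → k ≠ i →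
      dist (u j) (u k) = δ i / ((M j 2 : ℝ) * (M k 2 : ℝ)) ∧
      Metric.infDist (u i) (affineSpan ℝ {u j, u k} : Set (EuclideanSpace ℝ (Fin 2))) =
        1 / ((M i 2 : ℝ) * δ i) := by
  set A := M.map (Int.cast : ℤ → ℝ)
  have hA : A.det = 1 := by rw [← Int.cast_det, hdet, Int.cast_one]
  have hr' : ∀ i, 0 < A i 2 := fun i => Int.cast_pos.2 (hr i)
  obtain rfl : u = fun i => dehomogenize (A i) := funext fun i => WithLp.ofLp_injective _ (hu i)
  have hLA : L = A.adjugateᵀ := by rw [hL, inv_def, hA, Ring.inverse_one, one_smul]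
  have hLrow : ∀ i, L i = A (i + 1) ⨯₃ A (i + 2) := fun i => by
    rw [hLA, transpose_adjugate_apply_eq_cross]
  have hdot : ∀ i, A i ⬝ᵥ L i = 1 := fun i => by
    rw [hLA, dotProduct_transpose_adjugate_self, hA]
  have hcyclic : ∀ i, dist (dehomogenize (A (i + 1))) (dehomogenize (A (i + 2))) =
        δ i / (A (i + 1) 2 * A (i + 2) 2) ∧
      infDist (dehomogenize (A i)) (line[ℝ, dehomogenize (A (i + 1)), dehomogenize (A (i + 2))] :
        Set (EuclideanSpace ℝ (Fin 2))) = 1 / (A i 2 * δ i) := fun i => by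
    have hne := dehomogenize_ne_dehomogenize (hr' (i + 1)) (hr' (i + 2)) (x := A i)
      (by rw [← hLrow, hdot]; exact one_ne_zero)
    rw [hδ, hLrow, dist_dehomogenize (hr' _) (hr' _),
      infDist_dehomogenize (hr' _) (hr' _) (hr' _) hne, ← hLrow, hdot, abs_one]
    exact ⟨rfl, rfl⟩
  intro i j k hij hjk hki
  rcases Fin.three_cases_of_pairwise_ne hij hjk hki with ⟨rfl, rfl⟩ | ⟨rfl, rfl⟩
  · exact hcyclic i
  · rw [dist_comm, Set.pair_comm, mul_comm]
    exact hcyclic i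
end

section
/- Let θ > π/4 and let D₀ ⊇ D₁ ⊇ D₂ ⊇ ... be a nested sequence of closed triangles in ℝ² such that every interior angle of every Dₙ exceeds θ and area(Dₙ) → 0. Then ⋂ₙ Dₙ is a singleton. -/
/-!
If every angle of a triangle exceeds `θ > 0`, every angle lies in `[θ, π - θ]` and so has sine
at least `sin θ`. By the law of sines each side `c` then satisfies `sin θ * c ≤ b` for another
side `b`, so `(sin θ)² c² ≤ b c sin α`, which is twice the area.
Hence the diameters of the triangles `Dₙ` are `O(√area(Dₙ))` and tend to `0`, and the nested
compact sets `Dₙ` meet in exactly one point.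
-/

open MeasureTheory EuclideanGeometry Filter Metric Real Pointwise

theorem Metric.exists_iInter_eq_singleton_of_tendsto_diam {X : Type*} [MetricSpace X]
    {s : ℕ → Set X} (h0 : IsCompact (s 0)) (hclosed : ∀ n, IsClosed (s n))
    (hne : ∀ n, (s n).Nonempty) (hnest : ∀ n, s (n + 1) ⊆ s n)
    (hdiam : Tendsto (fun n => diam (s n)) atTop (nhds 0)) :
    ∃ x, ⋂ n, s n = {x} := by
  obtain ⟨x, hx⟩ :=
    h0.nonempty_iInter_of_sequence_nonempty_isCompact_isClosed s hnest hne hclosed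
  refine ⟨x, Set.eq_singleton_iff_unique_mem.2 ⟨hx, fun y hy => dist_le_zero.1 ?_⟩⟩
  have hbdd : ∀ n, Bornology.IsBounded (s n) := fun n =>
    h0.isBounded.subset ((antitone_nat_of_succ_le hnest) (Nat.zero_le n))
  refine ge_of_tendsto hdiam (Eventually.of_forall fun n => ?_)
  exact dist_le_diam_of_mem (hbdd n) (Set.mem_iInter.1 hy n) (Set.mem_iInter.1 hx n)

theorem Real.sin_le_sin_of_le_of_le_pi_sub {θ x : ℝ} (hθ : 0 ≤ θ) (h₁ : θ ≤ x)
    (h₂ : x ≤ π - θ) : sin θ ≤ sin x := by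
  rcases le_total x (π / 2) with hx | hx
  · exact sin_le_sin_of_le_of_le_pi_div_two (by linarith [pi_pos]) hx h₁
  · rw [← sin_pi_sub x]
    exact sin_le_sin_of_le_of_le_pi_div_two (by linarith [pi_pos]) (by linarith) (by linarith)

namespace EuclideanGeometry

variable {V P : Type*} [NormedAddCommGroup V] [InnerProductSpace ℝ V] [MetricSpace P]
  [NormedAddTorsor V P]

theorem sin_le_sin_angle_of_le_angle {θ : ℝ} (hθ : 0 ≤ θ) {A B C : P} (hAB : A ≠ B)
    (hA : θ ≤ ∠ B A C) (hB : θ ≤ ∠ A B C) : sin θ ≤ sin (∠ B A C) := by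
  have hsum := angle_add_angle_add_angle_eq_pi C hAB.symm
  rw [angle_comm C A B] at hsum
  exact sin_le_sin_of_le_of_le_pi_sub hθ hA (by linarith [angle_nonneg B C A])

theorem sq_mul_dist_sq_le_sin_angle_mul_dist_mul_dist {s : ℝ} (hs : 0 ≤ s) {A B C : P}
    (hA : s ≤ sin (∠ B A C)) (hB : s ≤ sin (∠ A B C)) :
    s ^ 2 * dist A B ^ 2 ≤ sin (∠ B A C) * dist A B * dist A C := by
  have hAB : s * dist A B ≤ dist A C := by
    calc s * dist A B ≤ sin (∠ C B A) * dist B A := by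
          rw [angle_comm, dist_comm]; exact mul_le_mul_of_nonneg_right hB dist_nonneg
      _ = sin (∠ A C B) * dist A C := law_sin C B A
      _ ≤ dist A C := mul_le_of_le_one_left dist_nonneg (sin_le_one _)
  calc s ^ 2 * dist A B ^ 2 = s * dist A B * (s * dist A B) := by ring
    _ ≤ sin (∠ B A C) * dist A B * dist A C := by
      rw [mul_comm (sin _ * _)]
      exact mul_le_mul hAB (mul_le_mul_of_nonneg_right hA dist_nonneg)
        (by positivity) dist_nonneg

end EuclideanGeometry

theorem diam_convexHull_triangle_le {E : Type*} [NormedAddCommGroup E] [InnerProductSpace ℝ E]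
    {θ : ℝ} (hθ : 0 < θ) {A B C : E} (hAB : A ≠ B) (hAC : A ≠ C)
    (hA : θ ≤ ∠ B A C) (hB : θ ≤ ∠ A B C) (hC : θ ≤ ∠ A C B) :
    diam (convexHull ℝ {A, B, C}) ≤
      2 * (√(sin (∠ B A C) * dist A B * dist A C) / sin θ) := by
  have hangle_sum := angle_add_angle_add_angle_eq_pi C hAB.symm
  rw [angle_comm B C A, angle_comm C A B] at hangle_sum
  have hsinθ : 0 < sin θ := sin_pos_of_pos_of_lt_pi hθ (by linarith [pi_pos])
  have hsA := sin_le_sin_angle_of_le_angle hθ.le hAB hA hB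
  have hsB := sin_le_sin_angle_of_le_angle hθ.le hAB.symm hB hA
  have hsC := sin_le_sin_angle_of_le_angle hθ.le hAC.symm hC (angle_comm B A C ▸ hA)
  have hbound : ∀ X, sin θ ^ 2 * dist A X ^ 2 ≤ sin (∠ B A C) * dist A B * dist A C →
      dist X A ≤ √(sin (∠ B A C) * dist A B * dist A C) / sin θ := by
    intro X hX
    rw [le_div_iff₀ hsinθ, dist_comm]
    exact Real.le_sqrt_of_sq_le (by linarith)
  rw [convexHull_diam]
  refine diam_le_of_subset_closedBall (x := A) (by positivity) ?_
  refine Set.insert_subset (mem_closedBall_self (by positivity)) (Set.insert_subset ?_ ?_)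
  · exact hbound B (sq_mul_dist_sq_le_sin_angle_mul_dist_mul_dist hsinθ.le hsA hsB)
  · refine Set.singleton_subset_iff.2 (hbound C ?_)
    have := sq_mul_dist_sq_le_sin_angle_mul_dist_mul_dist hsinθ.le (angle_comm B A C ▸ hsA) hsC
    rwa [angle_comm, mul_right_comm] at this

def unitTriangle : Set (EuclideanSpace ℝ (Fin 2)) :=
  convexHull ℝ {0, EuclideanSpace.single 0 1, EuclideanSpace.single 1 1}

theorem volume_unitTriangle_pos : 0 < volume unitTriangle := by
  have hspan : affineSpan ℝ unitTriangle = ⊤ := by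
    rw [← AffineSubspace.coe_eq_univ_iff, unitTriangle, affineSpan_convexHull,
      affineSpan_insert_zero, Submodule.coe_eq_univ]
    let b := (EuclideanSpace.basisFun (Fin 2) ℝ).toBasis
    refine eq_top_iff.2 (b.span_eq ▸ Submodule.span_mono ?_)
    rintro _ ⟨i, rfl⟩
    fin_cases i <;> simp [b]
  have hne := (convex_convexHull ℝ _).interior_nonempty_iff_affineSpan_eq_top.2 hspan
  exact (isOpen_interior.measure_pos volume hne).trans_le (measure_mono interior_subset)

theorem volume_unitTriangle_ne_top : volume unitTriangle ≠ ⊤ :=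
  ((Set.toFinite _).isCompact_convexHull (𝕜 := ℝ)).measure_lt_top.ne

theorem abs_det_eq_sin_angle_mul_norm_mul_norm (u v : EuclideanSpace ℝ (Fin 2)) :
    |u 0 * v 1 - u 1 * v 0| = sin (InnerProductGeometry.angle u v) * ‖u‖ * ‖v‖ := by
  rw [mul_assoc, InnerProductGeometry.sin_angle_mul_norm_mul_norm, ← sqrt_sq_eq_abs]
  congr 1
  simp only [PiLp.inner_apply, RCLike.inner_apply, conj_trivial, Fin.sum_univ_two]
  ring

theorem volume_convexHull_add (a u v : EuclideanSpace ℝ (Fin 2)) :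
    volume (convexHull ℝ {a, a + u, a + v}) =
      ENNReal.ofReal |u 0 * v 1 - u 1 * v 0| * volume unitTriangle := by
  let b := (EuclideanSpace.basisFun (Fin 2) ℝ).toBasis
  let f := b.constr ℝ ![u, v]
  have h0 : f (EuclideanSpace.single 0 1) = u := by simp [f, b]
  have h1 : f (EuclideanSpace.single 1 1) = v := by simp [f, b]
  have hdet : LinearMap.det f = u 0 * v 1 - u 1 * v 0 := by
    rw [← LinearMap.det_toMatrix b, Matrix.det_fin_two]
    simp only [LinearMap.toMatrix_apply, b, OrthonormalBasis.coe_toBasis,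
      EuclideanSpace.basisFun_apply, h0, h1, OrthonormalBasis.coe_toBasis_repr_apply,
      EuclideanSpace.basisFun_repr]
    ring
  have heq : convexHull ℝ {a, a + u, a + v} = a +ᵥ f '' unitTriangle := by
    rw [unitTriangle, f.image_convexHull, ← convexHull_vadd]
    simp [Set.image_insert_eq, h0, h1, Set.vadd_set_insert]
  rw [heq, measure_vadd, Measure.addHaar_image_linearMap, hdet]

theorem volume_convexHull_triangle (A B C : EuclideanSpace ℝ (Fin 2)) :
    volume (convexHull ℝ {A, B, C}) =
      ENNReal.ofReal (sin (∠ B A C) * dist A B * dist A C) * volume unitTriangle := by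
  have := volume_convexHull_add A (B - A) (C - A)
  rwa [add_sub_cancel, add_sub_cancel, abs_det_eq_sin_angle_mul_norm_mul_norm,
    ← dist_eq_norm', ← dist_eq_norm'] at this

theorem tendsto_sin_angle_mul_dist_mul_dist_of_tendsto_volume
    {A B C : ℕ → EuclideanSpace ℝ (Fin 2)}
    (h : Tendsto (fun n => volume (convexHull ℝ {A n, B n, C n})) atTop (nhds 0)) :
    Tendsto (fun n => sin (∠ (B n) (A n) (C n)) * dist (A n) (B n) * dist (A n) (C n))
      atTop (nhds 0) := by
  have hT : 0 < (volume unitTriangle).toReal :=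
    ENNReal.toReal_pos volume_unitTriangle_pos.ne' volume_unitTriangle_ne_top
  have hreal := ((ENNReal.tendsto_toReal ENNReal.zero_ne_top).comp h).div_const
    (volume unitTriangle).toReal
  refine (zero_div (volume unitTriangle).toReal ▸ hreal).congr fun n => ?_
  have hnonneg : 0 ≤ sin (∠ (B n) (A n) (C n)) * dist (A n) (B n) * dist (A n) (C n) :=
    mul_nonneg (mul_nonneg (InnerProductGeometry.sin_angle_nonneg _ _) dist_nonneg) dist_nonneg
  simp only [Function.comp_apply, volume_convexHull_triangle, ENNReal.toReal_mul,
    ENNReal.toReal_ofReal hnonneg, mul_div_cancel_right₀ _ hT.ne']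

/-- A nested sequence of closed triangles, all of whose angles exceed some
`θ > π/4`, whose areas tend to `0`, intersects in a single point. -/
theorem stmt9 (θ : ℝ) (hθ : Real.pi / 4 < θ)
    (A B C : ℕ → EuclideanSpace ℝ (Fin 2))
    (hind : ∀ n, AffineIndependent ℝ ![A n, B n, C n])
    (D : ℕ → Set (EuclideanSpace ℝ (Fin 2)))
    (hD : ∀ n, D n = convexHull ℝ {A n, B n, C n})
    (hnest : ∀ n, D (n + 1) ⊆ D n)
    (hang : ∀ n, θ < angle (B n) (A n) (C n) ∧ θ < angle (A n) (B n) (C n) ∧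
      θ < angle (A n) (C n) (B n))
    (harea : Tendsto (fun n => volume (D n)) atTop (nhds 0)) :
    ∃ x, (⋂ n, D n) = {x} := by
  have hθ0 : 0 < θ := lt_trans (by positivity) hθ
  have hcompact : ∀ n, IsCompact (D n) := fun n =>
    hD n ▸ (Set.toFinite _).isCompact_convexHull (𝕜 := ℝ)
  have hdiam : ∀ n, diam (D n) ≤
      2 * (√(sin (∠ (B n) (A n) (C n)) * dist (A n) (B n) * dist (A n) (C n)) / sin θ) :=
    fun n => hD n ▸ diam_convexHull_triangle_le hθ0
      ((hind n).injective.ne (by decide : (0 : Fin 3) ≠ 1))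
      ((hind n).injective.ne (by decide : (0 : Fin 3) ≠ 2))
      (hang n).1.le (hang n).2.1.le (hang n).2.2.le
  have hlim := (tendsto_sin_angle_mul_dist_mul_dist_of_tendsto_volume
    (by simpa only [hD] using harea)).sqrt.div_const (sin θ) |>.const_mul 2
  rw [sqrt_zero, zero_div, mul_zero] at hlim
  refine exists_iInter_eq_singleton_of_tendsto_diam (hcompact 0) (fun n => (hcompact n).isClosed)
    (fun n => hD n ▸ (convexHull_nonempty_iff.2 (Set.insert_nonempty _ _))) hnest
    (squeeze_zero (fun n => diam_nonneg) hdiam hlim)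
end

section
/- Let T be a triangle in ℝ² whose interior angles all exceed some θ with π/4 < θ < π/2. Then diam(T)² · sin θ · cos θ ≤ 2·area(T); in particular diam(T) ≤ √(2·area(T)/(sin θ cos θ)). -/
open MeasureTheory EuclideanGeometry Pointwise

noncomputable section StmtTen

private def eA : EuclideanSpace ℝ (Fin 2) := (WithLp.equiv 2 (Fin 2 → ℝ)).symm ![1,0]
private def eB : EuclideanSpace ℝ (Fin 2) := (WithLp.equiv 2 (Fin 2 → ℝ)).symm ![0,1]

private lemma vol_S2 : volume {p : ℝ × ℝ | 0 ≤ p.1 ∧ 0 ≤ p.2 ∧ p.1 + p.2 ≤ 1} = ENNReal.ofReal (1/2) := by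
  have hS : MeasurableSet {p : ℝ × ℝ | 0 ≤ p.1 ∧ 0 ≤ p.2 ∧ p.1 + p.2 ≤ 1} := by
    refine (measurableSet_le measurable_const measurable_fst).inter
      ((measurableSet_le measurable_const measurable_snd).inter
      (measurableSet_le (measurable_fst.add measurable_snd) measurable_const))
  rw [Measure.volume_eq_prod, Measure.prod_apply hS]
  have hfib : ∀ x : ℝ, volume (Prod.mk x ⁻¹' {p : ℝ × ℝ | 0 ≤ p.1 ∧ 0 ≤ p.2 ∧ p.1 + p.2 ≤ 1}) =
      Set.indicator (Set.Icc (0:ℝ) 1) (fun x => ENNReal.ofReal (1 - x)) x := by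
    intro x
    by_cases hx : x ∈ Set.Icc (0:ℝ) 1
    · have : Prod.mk x ⁻¹' {p : ℝ × ℝ | 0 ≤ p.1 ∧ 0 ≤ p.2 ∧ p.1 + p.2 ≤ 1} = Set.Icc 0 (1 - x) := by
        ext y
        simp only [Set.mem_preimage, Set.mem_setOf_eq, Set.mem_Icc]
        constructor
        · rintro ⟨_, h2, h3⟩; exact ⟨h2, by linarith⟩
        · rintro ⟨h2, h3⟩; exact ⟨hx.1, h2, by linarith⟩
      rw [this, Real.volume_Icc, Set.indicator_of_mem hx, sub_zero]
    · have : Prod.mk x ⁻¹' {p : ℝ × ℝ | 0 ≤ p.1 ∧ 0 ≤ p.2 ∧ p.1 + p.2 ≤ 1} = ∅ := by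
        ext y
        simp only [Set.mem_preimage, Set.mem_setOf_eq, Set.mem_empty_iff_false, iff_false, not_and]
        intro h1 h2 h3
        exact hx ⟨h1, by linarith⟩
      rw [this, measure_empty, Set.indicator_of_notMem hx]
  simp_rw [hfib]
  rw [lintegral_indicator measurableSet_Icc]
  have hint : IntegrableOn (fun a : ℝ => 1 - a) (Set.Icc (0:ℝ) 1) volume :=
    (Continuous.integrableOn_Icc (by continuity))
  have hnn : 0 ≤ᵐ[volume.restrict (Set.Icc (0:ℝ) 1)] fun a : ℝ => 1 - a :=
    (ae_restrict_iff' measurableSet_Icc).2 (Filter.Eventually.of_forall fun x hx => by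
      simp only [Pi.zero_apply]; linarith [hx.2])
  rw [← ofReal_integral_eq_lintegral_ofReal hint hnn]
  congr 1
  rw [MeasureTheory.integral_Icc_eq_integral_Ioc, ← intervalIntegral.integral_of_le zero_le_one]
  rw [intervalIntegral.integral_sub intervalIntegrable_const intervalIntegral.intervalIntegrable_id]
  simp [integral_id]
  norm_num

private lemma vol_SE : volume {x : EuclideanSpace ℝ (Fin 2) | 0 ≤ x 0 ∧ 0 ≤ x 1 ∧ x 0 + x 1 ≤ 1}
    = ENNReal.ofReal (1/2) := by
  have hS2 : MeasurableSet {p : ℝ × ℝ | 0 ≤ p.1 ∧ 0 ≤ p.2 ∧ p.1 + p.2 ≤ 1} :=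
    (measurableSet_le measurable_const measurable_fst).inter
      ((measurableSet_le measurable_const measurable_snd).inter
      (measurableSet_le (measurable_fst.add measurable_snd) measurable_const))
  have h1 : {x : EuclideanSpace ℝ (Fin 2) | 0 ≤ x 0 ∧ 0 ≤ x 1 ∧ x 0 + x 1 ≤ 1}
      = (MeasurableEquiv.toLp 2 (Fin 2 → ℝ)).symm ⁻¹'
        ((MeasurableEquiv.finTwoArrow (α := ℝ)) ⁻¹' {p : ℝ × ℝ | 0 ≤ p.1 ∧ 0 ≤ p.2 ∧ p.1 + p.2 ≤ 1}) := rfl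
  rw [h1,
    (EuclideanSpace.volume_preserving_symm_measurableEquiv_toLp (Fin 2)).measure_preimage
      (((MeasurableEquiv.finTwoArrow (α := ℝ)).measurable hS2)).nullMeasurableSet,
    (volume_preserving_finTwoArrow ℝ).measure_preimage hS2.nullMeasurableSet]
  exact vol_S2

private lemma hull_eq_SE : convexHull ℝ ({0, eA, eB} : Set (EuclideanSpace ℝ (Fin 2)))
    = {x : EuclideanSpace ℝ (Fin 2) | 0 ≤ x 0 ∧ 0 ≤ x 1 ∧ x 0 + x 1 ≤ 1} := by
  apply Set.Subset.antisymm
  · apply convexHull_min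
    · rintro x (rfl | rfl | rfl)
      · exact ⟨le_refl 0, le_refl 0, by norm_num⟩
      · refine ⟨?_, ?_, ?_⟩ <;> simp [eA, WithLp.equiv_symm_apply, PiLp.toLp_apply]
      · refine ⟨?_, ?_, ?_⟩ <;> simp [eB, WithLp.equiv_symm_apply, PiLp.toLp_apply]
    · have l0 : IsLinearMap ℝ (fun x : EuclideanSpace ℝ (Fin 2) => x 0) := ⟨fun _ _ => rfl, fun _ _ => rfl⟩
      have l1 : IsLinearMap ℝ (fun x : EuclideanSpace ℝ (Fin 2) => x 1) := ⟨fun _ _ => rfl, fun _ _ => rfl⟩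
      have l01 : IsLinearMap ℝ (fun x : EuclideanSpace ℝ (Fin 2) => x 0 + x 1) :=
        ⟨fun _ _ => by simp [PiLp.add_apply]; ring, fun c _ => by simp [PiLp.smul_apply]; ring⟩
      have : {x : EuclideanSpace ℝ (Fin 2) | 0 ≤ x 0 ∧ 0 ≤ x 1 ∧ x 0 + x 1 ≤ 1}
          = {x | 0 ≤ x 0} ∩ ({x | 0 ≤ x 1} ∩ {x | x 0 + x 1 ≤ 1}) := rfl
      rw [this]
      exact (convex_halfSpace_ge l0 0).inter ((convex_halfSpace_ge l1 0).inter (convex_halfSpace_le l01 1))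
  · rintro x ⟨h0, h1, h01⟩
    have := (convex_convexHull ℝ ({0, eA, eB} : Set (EuclideanSpace ℝ (Fin 2)))).sum_mem
      (t := (Finset.univ : Finset (Fin 3)))
      (w := ![1 - x 0 - x 1, x 0, x 1]) (z := ![0, eA, eB])
      (by intro i _; fin_cases i <;> simp <;> linarith)
      (by simp [Fin.sum_univ_three]; ring)
      (fun i _ => by
        fin_cases i <;> exact subset_convexHull _ _ (by simp))
    have hx : x = ∑ j : Fin 3, (![1 - x 0 - x 1, x 0, x 1] j) • (![0, eA, eB] j) := by
      apply PiLp.ext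
      intro i
      have hsum : (∑ j : Fin 3, (![1 - x 0 - x 1, x 0, x 1] j) • (![0, eA, eB] j)) i
          = (1 - x 0 - x 1) * (0:ℝ) + x 0 * eA i + x 1 * eB i := by
        simp [Fin.sum_univ_three, PiLp.add_apply, PiLp.smul_apply]
      rw [hsum]
      fin_cases i <;> simp [eA, eB, WithLp.equiv_symm_apply, PiLp.toLp_apply]
    rw [hx]; exact this

private lemma vol_hull0 (u v : EuclideanSpace ℝ (Fin 2)) :
    volume (convexHull ℝ ({0, u, v} : Set (EuclideanSpace ℝ (Fin 2))))
      = ENNReal.ofReal (|u 0 * v 1 - v 0 * u 1| * (1/2)) := by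
  set f := Matrix.toEuclideanLin !![u 0, v 0; u 1, v 1] with hf
  have hfa : f eA = u := by
    rw [hf, eA, WithLp.equiv_symm_apply, Matrix.toEuclideanLin_apply_piLp_toLp]
    apply PiLp.ext; intro i
    rw [PiLp.toLp_apply]
    fin_cases i <;> simp [Matrix.mulVec, dotProduct, Fin.sum_univ_two]
  have hfb : f eB = v := by
    rw [hf, eB, WithLp.equiv_symm_apply, Matrix.toEuclideanLin_apply_piLp_toLp]
    apply PiLp.ext; intro i
    rw [PiLp.toLp_apply]
    fin_cases i <;> simp [Matrix.mulVec, dotProduct, Fin.sum_univ_two]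
  have himg : f '' ({0, eA, eB} : Set (EuclideanSpace ℝ (Fin 2))) = {0, u, v} := by
    rw [Set.image_insert_eq, Set.image_insert_eq, Set.image_singleton, map_zero, hfa, hfb]
  have hdet : f.det = u 0 * v 1 - v 0 * u 1 := by
    rw [hf, Matrix.toEuclideanLin_eq_toLin, LinearMap.det_toLin, Matrix.det_fin_two_of]
  rw [← himg, ← LinearMap.image_convexHull, Measure.addHaar_image_linearMap, hdet,
    hull_eq_SE, vol_SE, ← ENNReal.ofReal_mul (abs_nonneg _)]

private lemma areaA (A B C : EuclideanSpace ℝ (Fin 2)) :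
    (volume (convexHull ℝ ({A, B, C} : Set (EuclideanSpace ℝ (Fin 2))))).toReal
      = Real.sin (∠ B A C) * (dist A B * dist A C) / 2 := by
  set u := B - A with hu
  set v := C - A with hv
  have hset : A +ᵥ ({0, u, v} : Set (EuclideanSpace ℝ (Fin 2))) = {A, B, C} := by
    have h : A +ᵥ ({0, u, v} : Set (EuclideanSpace ℝ (Fin 2)))
        = (fun x => A + x) '' {0, u, v} := rfl
    rw [h, Set.image_insert_eq, Set.image_insert_eq, Set.image_singleton]
    simp [hu, hv]
  rw [← hset, convexHull_vadd, measure_vadd, vol_hull0]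
  rw [ENNReal.toReal_ofReal (by positivity)]
  have hang : ∠ B A C = InnerProductGeometry.angle u v := by
    rw [EuclideanGeometry.angle, hu, hv]; rfl
  have hd1 : dist A B = ‖u‖ := by rw [dist_eq_norm, hu, norm_sub_rev]
  have hd2 : dist A C = ‖v‖ := by rw [dist_eq_norm, hv, norm_sub_rev]
  rw [hang, hd1, hd2]
  have key : Real.sin (InnerProductGeometry.angle u v) * (‖u‖ * ‖v‖)
      = |u 0 * v 1 - v 0 * u 1| := by
    rw [InnerProductGeometry.sin_angle_mul_norm_mul_norm]
    have hiuu : (inner ℝ u u : ℝ) = u 0 * u 0 + u 1 * u 1 := by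
      rw [PiLp.inner_apply]; simp [Fin.sum_univ_two] <;> ring
    have hivv : (inner ℝ v v : ℝ) = v 0 * v 0 + v 1 * v 1 := by
      rw [PiLp.inner_apply]; simp [Fin.sum_univ_two] <;> ring
    have hiuv : (inner ℝ u v : ℝ) = u 0 * v 0 + u 1 * v 1 := by
      rw [PiLp.inner_apply]; simp [Fin.sum_univ_two] <;> ring
    rw [hiuu, hivv, hiuv, show (u 0 * u 0 + u 1 * u 1) * (v 0 * v 0 + v 1 * v 1)
        - (u 0 * v 0 + u 1 * v 1) * (u 0 * v 0 + u 1 * v 1)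
        = (u 0 * v 1 - v 0 * u 1)^2 by ring, Real.sqrt_sq_eq_abs]
  rw [← key]
  ring

private lemma key10 (θ : ℝ) (hθ₁ : Real.pi / 4 < θ) (hθ₂ : θ < Real.pi / 2)
    (A B C : EuclideanSpace ℝ (Fin 2))
    (hab : A ≠ B) (hac : A ≠ C) (hbc : B ≠ C)
    (hA : θ < angle B A C) (hB : θ < angle A B C) (hC : θ < angle A C B) :
    dist B C ^ 2 * Real.sin θ * Real.cos θ ≤
      2 * (volume (convexHull ℝ ({A, B, C} : Set (EuclideanSpace ℝ (Fin 2))))).toReal := by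
  have hθ0 : 0 < θ := lt_trans (by positivity) hθ₁
  set ar := (volume (convexHull ℝ ({A, B, C} : Set (EuclideanSpace ℝ (Fin 2))))).toReal with har
  -- the three area formulas
  have e1 : 2 * ar = Real.sin (∠ B A C) * (dist A B * dist A C) := by
    rw [har, areaA]; ring
  have e2 : 2 * ar = Real.sin (∠ A B C) * (dist A B * dist B C) := by
    have hs : ({B, A, C} : Set (EuclideanSpace ℝ (Fin 2))) = {A, B, C} := Set.insert_comm _ _ _
    rw [har, ← hs, areaA, dist_comm B A]; ring
  have e3 : 2 * ar = Real.sin (∠ A C B) * (dist A C * dist B C) := by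
    have hs : ({C, A, B} : Set (EuclideanSpace ℝ (Fin 2))) = {A, B, C} := by
      rw [Set.insert_comm, Set.pair_comm]
    rw [har, ← hs, areaA, dist_comm C A, dist_comm C B]; ring
  -- angle sum
  have hsum : ∠ A B C + ∠ B C A + ∠ C A B = Real.pi :=
    angle_add_angle_add_angle_eq_pi C (Ne.symm hab)
  rw [angle_comm B C A, angle_comm C A B] at hsum
  -- each angle < π/2
  have h2θ : 2 * θ < Real.pi := by linarith [Real.pi_pos]
  have haA : ∠ B A C < Real.pi / 2 := by linarith
  have haB : ∠ A B C < Real.pi / 2 := by linarith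
  have haC : ∠ A C B < Real.pi / 2 := by linarith
  -- sin bounds
  have hmono := Real.strictMonoOn_sin
  have hsinθpos : 0 < Real.sin θ := Real.sin_pos_of_pos_of_lt_pi hθ0 (by linarith [Real.pi_pos])
  have hcosθpos : 0 < Real.cos θ := Real.cos_pos_of_mem_Ioo ⟨by linarith, hθ₂⟩
  have hcs : Real.cos θ ≤ Real.sin θ := by
    rw [← Real.sin_pi_div_two_sub]
    exact (hmono (by constructor <;> linarith) (by constructor <;> linarith) (by linarith)).le
  have hsB : Real.sin θ ≤ Real.sin (∠ A B C) :=
    (hmono (by constructor <;> linarith) (by constructor <;> linarith) hB).le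
  have hsC : Real.sin θ ≤ Real.sin (∠ A C B) :=
    (hmono (by constructor <;> linarith) (by constructor <;> linarith) hC).le
  have hsA : Real.sin (∠ B A C) ≤ 1 := Real.sin_le_one _
  have hsApos : 0 < Real.sin (∠ B A C) :=
    Real.sin_pos_of_pos_of_lt_pi (lt_trans hθ0 hA) (by linarith)
  -- positivity of area
  have hdab : 0 < dist A B := dist_pos.2 hab
  have hdac : 0 < dist A C := dist_pos.2 hac
  have hdbc : 0 < dist B C := dist_pos.2 hbc
  have harpos : 0 < 2 * ar := by rw [e1]; positivity
  -- the identity 2 ar sinA = dBC² sinB sinC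
  have hiden : (2 * ar) * Real.sin (∠ B A C)
      = dist B C ^ 2 * (Real.sin (∠ A B C) * Real.sin (∠ A C B)) := by
    have h1 : (2 * ar) * ((2 * ar) * Real.sin (∠ B A C))
        = (2 * ar) * (dist B C ^ 2 * (Real.sin (∠ A B C) * Real.sin (∠ A C B))) := by
      linear_combination (Real.sin (∠ B A C) * (2 * ar)) * e2
        + (Real.sin (∠ B A C) * (Real.sin (∠ A B C) * (dist A B * dist B C))) * e3
        - (dist B C ^ 2 * Real.sin (∠ A B C) * Real.sin (∠ A C B)) * e1
    exact mul_left_cancel₀ (ne_of_gt harpos) h1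
  -- conclude
  have hstep : Real.sin θ * Real.cos θ ≤ Real.sin (∠ A B C) * Real.sin (∠ A C B) := by
    calc Real.sin θ * Real.cos θ ≤ Real.sin θ * Real.sin θ :=
          mul_le_mul_of_nonneg_left hcs hsinθpos.le
      _ ≤ Real.sin (∠ A B C) * Real.sin (∠ A C B) :=
          mul_le_mul hsB hsC hsinθpos.le (le_trans hsinθpos.le hsB)
  calc dist B C ^ 2 * Real.sin θ * Real.cos θ
      = dist B C ^ 2 * (Real.sin θ * Real.cos θ) := by ring
    _ ≤ dist B C ^ 2 * (Real.sin (∠ A B C) * Real.sin (∠ A C B)) :=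
        mul_le_mul_of_nonneg_left hstep (sq_nonneg _)
    _ = (2 * ar) * Real.sin (∠ B A C) := hiden.symm
    _ ≤ (2 * ar) * 1 := mul_le_mul_of_nonneg_left hsA harpos.le
    _ = 2 * ar := mul_one _

/-- Quantitative control of the diameter by the area for triangles with all
angles in `(θ, π/2)` range bound: `diam(T)² · sin θ · cos θ ≤ 2·area(T)`, hence
`diam(T) ≤ √(2·area(T)/(sin θ · cos θ))`. -/
theorem stmt10 (θ : ℝ) (hθ₁ : Real.pi / 4 < θ) (hθ₂ : θ < Real.pi / 2)
    (A B C : EuclideanSpace ℝ (Fin 2))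
    (hABC : AffineIndependent ℝ ![A, B, C])
    (hA : θ < angle B A C) (hB : θ < angle A B C) (hC : θ < angle A C B) :
    Metric.diam (convexHull ℝ {A, B, C}) ^ 2 * Real.sin θ * Real.cos θ ≤
        2 * (volume (convexHull ℝ {A, B, C})).toReal ∧
      Metric.diam (convexHull ℝ {A, B, C}) ≤
        Real.sqrt (2 * (volume (convexHull ℝ {A, B, C})).toReal /
          (Real.sin θ * Real.cos θ)) := by
  have hinj := hABC.injective
  have hab : A ≠ B := fun h => by
    have h01 : (0 : Fin 3) = 1 := hinj (show ![A,B,C] 0 = ![A,B,C] 1 by simpa using h)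
    exact absurd h01 (by decide)
  have hac : A ≠ C := fun h => by
    have h02 : (0 : Fin 3) = 2 := hinj (show ![A,B,C] 0 = ![A,B,C] 2 by simpa using h)
    exact absurd h02 (by decide)
  have hbc : B ≠ C := fun h => by
    have h12 : (1 : Fin 3) = 2 := hinj (show ![A,B,C] 1 = ![A,B,C] 2 by simpa using h)
    exact absurd h12 (by decide)
  have hθ0 : 0 < θ := lt_trans (by positivity) hθ₁
  have hsinθpos : 0 < Real.sin θ :=
    Real.sin_pos_of_pos_of_lt_pi hθ0 (by linarith [Real.pi_pos])
  have hcosθpos : 0 < Real.cos θ := Real.cos_pos_of_mem_Ioo ⟨by linarith, hθ₂⟩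
  set ar := (volume (convexHull ℝ ({A, B, C} : Set (EuclideanSpace ℝ (Fin 2))))).toReal with har
  have hsCAB : ({C, A, B} : Set (EuclideanSpace ℝ (Fin 2))) = {A, B, C} := by
    rw [Set.insert_comm, Set.pair_comm]
  have hsBAC : ({B, A, C} : Set (EuclideanSpace ℝ (Fin 2))) = {A, B, C} :=
    Set.insert_comm _ _ _
  have hAB2 : dist A B ^ 2 * Real.sin θ * Real.cos θ ≤ 2 * ar := by
    have h := key10 θ hθ₁ hθ₂ C A B hac.symm hbc.symm hab
      hC (by rwa [angle_comm]) (by rwa [angle_comm])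
    rwa [hsCAB] at h
  have hAC2 : dist A C ^ 2 * Real.sin θ * Real.cos θ ≤ 2 * ar := by
    have h := key10 θ hθ₁ hθ₂ B A C hab.symm hbc hac
      hB hA (by rwa [angle_comm])
    rwa [hsBAC] at h
  have hBC2 : dist B C ^ 2 * Real.sin θ * Real.cos θ ≤ 2 * ar :=
    key10 θ hθ₁ hθ₂ A B C hab hac hbc hA hB hC
  set d := Metric.diam (convexHull ℝ ({A, B, C} : Set (EuclideanSpace ℝ (Fin 2)))) with hdd
  have hd : d = max (max (dist A B) (dist A C)) (dist B C) := by
    rw [hdd, convexHull_diam, Metric.diam_triple]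
  have hfirst : d ^ 2 * Real.sin θ * Real.cos θ ≤ 2 * ar := by
    rcases max_choice (max (dist A B) (dist A C)) (dist B C) with h1 | h1
    · rcases max_choice (dist A B) (dist A C) with h2 | h2
      · rw [hd, h1, h2]; exact hAB2
      · rw [hd, h1, h2]; exact hAC2
    · rw [hd, h1]; exact hBC2
  refine ⟨hfirst, ?_⟩
  have hsc : 0 < Real.sin θ * Real.cos θ := mul_pos hsinθpos hcosθpos
  have hd2 : d ^ 2 ≤ 2 * ar / (Real.sin θ * Real.cos θ) := by
    rw [le_div_iff₀ hsc]
    calc d ^ 2 * (Real.sin θ * Real.cos θ) = d ^ 2 * Real.sin θ * Real.cos θ := by ring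
      _ ≤ 2 * ar := hfirst
  calc d = Real.sqrt (d ^ 2) := (Real.sqrt_sq Metric.diam_nonneg).symm
    _ ≤ Real.sqrt (2 * ar / (Real.sin θ * Real.cos θ)) := Real.sqrt_le_sqrt hd2

end StmtTen
end
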